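/- arXiv:1012.0129 — 5 statements merged into one kernel-verified Lean document; each statement's English description precedes it below -/
import Mathlib

section
/- Let G be a group isomorphic to ℤ^(m) ⊕ ℤ_{n_1} ⊕ … ⊕ ℤ_{n_k}, where m, k ≥ 0, m + k ≥ 1, each n_i ≥ 2, and n_{i+1} divides n_i for all 1 ≤ i ≤ k−1. Then G is capable if and only if either m ≥ 2, or m = 0, k ≥ 2 and n_1 = n_2. -/
/-- A group `G` is capable if it is isomorphic to `E / Z(E)` for some group `E`. -/
def Capable (G : Type) [Group G] : Prop :=
  ∃ (E : Type) (_ : Group E), Nonempty (G ≃* E ⧸ Subgroup.center E)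

/-!
If `Q = E / Z(E)` is abelian, all commutators of `E` are central, so `⁅x, y ^ N⁆ = ⁅x, y⁆ ^ N =
⁅x ^ N, y⁆`. Hence if `Q` is generated by one element `g` together with elements of exponent
dividing `N`, a lift of `g ^ N` commutes with everything and `g ^ N = 1`. Taking `g` a generator
of the `ℤ` summand rules out `m = 1`; taking `g` a generator of `ℤ_{n₁}` and `N = n₂` rules
out `m = 0` unless `n₁ = n₂`.

Conversely, for a biadditive `f : A → A → C` the set `A × C` with
`(a, c) (b, d) = (a + b, c + d + f a b)` is a group whose commutators are `f a b - f b a`; if no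
`a ≠ 0` has `f a = flip f a`, its centre is `0 × C` and its central quotient is `A`. For
`ℤ ^ m ⊕ T` with `m ≥ 2` take `f x y = (xᵢ • y)ᵢ`; for `ℤ_{n₁} ⊕ ℤ_{n₁} ⊕ …` take
`f x y = x₁ • y`.
-/

theorem MulEquiv.capable_iff {G H : Type} [Group G] [Group H] (e : G ≃* H) :
    Capable G ↔ Capable H :=
  ⟨fun ⟨E, _, ⟨φ⟩⟩ => ⟨E, _, ⟨e.symm.trans φ⟩⟩, fun ⟨E, _, ⟨φ⟩⟩ => ⟨E, _, ⟨e.trans φ⟩⟩⟩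

theorem AddEquiv.capable_multiplicative_iff {A B : Type} [AddGroup A] [AddGroup B] (e : A ≃+ B) :
    Capable (Multiplicative A) ↔ Capable (Multiplicative B) :=
  e.toMultiplicative.capable_iff

open scoped commutatorElement

theorem commutatorElement_pow_right_of_commute {E : Type*} [Group E] {a b : E}
    (h : Commute ⁅a, b⁆ b) (N : ℕ) : ⁅a, b ^ N⁆ = ⁅a, b⁆ ^ N := by
  have hconj : a * b * a⁻¹ = ⁅a, b⁆ * b := by rw [commutatorElement_def]; group
  rw [commutatorElement_def, ← conj_pow, hconj, h.mul_pow, mul_inv_cancel_right]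

theorem commutatorElement_pow_left_of_commute {E : Type*} [Group E] {a b : E}
    (h : Commute ⁅a, b⁆ a) (N : ℕ) : ⁅a ^ N, b⁆ = ⁅a, b⁆ ^ N := by
  have h' : Commute ⁅b, a⁆ a := by rw [← commutatorElement_inv]; exact h.inv_left
  rw [← commutatorElement_inv, commutatorElement_pow_right_of_commute h', ← inv_pow,
    commutatorElement_inv]

theorem Capable.pow_eq_one_of_forall_pow_div_zpow_eq_one {Q : Type} [CommGroup Q]
    (hQ : Capable Q) {g : Q} {N : ℕ} (h : ∀ q : Q, ∃ z : ℤ, (q / g ^ z) ^ N = 1) :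
    g ^ N = 1 := by
  obtain ⟨E, _, ⟨φ⟩⟩ := hQ
  let π : E →* Q := φ.symm.toMonoidHom.comp (QuotientGroup.mk' _)
  have hπ : ∀ x, π x = 1 ↔ x ∈ Subgroup.center E := fun x => by
    simp [π, QuotientGroup.eq_one_iff]
  have hcomm : ∀ a b c : E, Commute ⁅a, b⁆ c := fun a b c =>
    (Subgroup.mem_center_iff.1 ((hπ _).1 (by
      rw [map_commutatorElement, commutatorElement_eq_one_iff_commute]
      exact Commute.all _ _)) c).symm
  obtain ⟨y, rfl⟩ : ∃ y, π y = g :=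
    φ.symm.surjective.comp (QuotientGroup.mk'_surjective _) g
  suffices y ^ N ∈ Subgroup.center E by rwa [← map_pow, hπ]
  refine Subgroup.mem_center_iff.2 fun x => ?_
  obtain ⟨z, hz⟩ := h (π x)
  set b := x * (y ^ z)⁻¹
  have hb : b ^ N ∈ Subgroup.center E := (hπ _).1 (by simpa [b, div_eq_mul_inv] using hz)
  have hby : Commute b (y ^ N) := by
    rw [← commutatorElement_eq_one_iff_commute,
      commutatorElement_pow_right_of_commute (hcomm b y y),
      ← commutatorElement_pow_left_of_commute (hcomm b y b), commutatorElement_eq_one_iff_commute]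
    exact (Subgroup.mem_center_iff.1 hb y).symm
  have hx : x = b * y ^ z := by simp [b]
  rw [hx]
  exact (hby.mul_left (((Commute.refl y).zpow_left z).pow_right N)).eq

theorem Capable.nsmul_eq_zero_of_forall_nsmul_sub_zsmul_eq_zero {A : Type} [AddCommGroup A]
    (hA : Capable (Multiplicative A)) {g : A} {N : ℕ}
    (h : ∀ a : A, ∃ z : ℤ, N • (a - z • g) = 0) : N • g = 0 :=
  hA.pow_eq_one_of_forall_pow_div_zpow_eq_one (g := .ofAdd g) h

section BiadditiveExtension

variable {A C : Type} [AddCommGroup A] [AddCommGroup C]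

@[ext]
structure BiadditiveExtension (f : A →+ A →+ C) where
  fst : A
  snd : C

namespace BiadditiveExtension

variable {f : A →+ A →+ C}

instance : Mul (BiadditiveExtension f) :=
  ⟨fun x y => ⟨x.fst + y.fst, x.snd + y.snd + f x.fst y.fst⟩⟩
instance : One (BiadditiveExtension f) := ⟨⟨0, 0⟩⟩
instance : Inv (BiadditiveExtension f) := ⟨fun x => ⟨-x.fst, -x.snd + f x.fst x.fst⟩⟩

@[simp] theorem fst_mul (x y : BiadditiveExtension f) : (x * y).fst = x.fst + y.fst := rfl
@[simp] theorem snd_mul (x y : BiadditiveExtension f) :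
    (x * y).snd = x.snd + y.snd + f x.fst y.fst := rfl
@[simp] theorem fst_one : (1 : BiadditiveExtension f).fst = 0 := rfl
@[simp] theorem snd_one : (1 : BiadditiveExtension f).snd = 0 := rfl
@[simp] theorem fst_inv (x : BiadditiveExtension f) : x⁻¹.fst = -x.fst := rfl
@[simp] theorem snd_inv (x : BiadditiveExtension f) : x⁻¹.snd = -x.snd + f x.fst x.fst := rfl

instance : Group (BiadditiveExtension f) where
  mul_assoc x y z := by ext <;> simp <;> abel
  one_mul x := by ext <;> simp
  mul_one x := by ext <;> simp
  inv_mul_cancel x := by ext <;> simp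

def fstHom : BiadditiveExtension f →* Multiplicative A where
  toFun x := .ofAdd x.fst
  map_one' := rfl
  map_mul' _ _ := rfl

theorem mem_center_iff (hf : ∀ a, (∀ b, f a b = f b a) → a = 0) {x : BiadditiveExtension f} :
    x ∈ Subgroup.center (BiadditiveExtension f) ↔ x.fst = 0 := by
  rw [Subgroup.mem_center_iff]
  constructor
  · refine fun hx => hf _ fun b => ?_
    simpa using (congrArg snd (hx ⟨b, 0⟩)).symm
  · intro hx y
    ext <;> simp [hx, add_comm]

end BiadditiveExtension

theorem capable_of_biadditive (f : A →+ A →+ C) (hf : ∀ a, (∀ b, f a b = f b a) → a = 0) :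
    Capable (Multiplicative A) := by
  open BiadditiveExtension in
  have hker : (fstHom (f := f)).ker = Subgroup.center _ := by
    ext x
    rw [MonoidHom.mem_ker, mem_center_iff hf]
    exact ofAdd_eq_one
  have hsurj : Function.Surjective (fstHom (f := f)) := fun a => ⟨⟨a.toAdd, 0⟩, rfl⟩
  exact ⟨_, _, ⟨(QuotientGroup.quotientKerEquivOfSurjective _ hsurj).symm.trans
    (QuotientGroup.quotientMulEquivOfEq hker)⟩⟩

end BiadditiveExtension

theorem capable_pi_int_prod_of_two_le {T : Type} [AddCommGroup T] {m : ℕ} (hm : 2 ≤ m) :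
    Capable (Multiplicative ((Fin m → ℤ) × T)) := by
  have : Nontrivial (Fin m) := Fin.nontrivial_iff_two_le.mpr hm
  let f : (Fin m → ℤ) × T →+ (Fin m → ℤ) × T →+ Fin m → (Fin m → ℤ) × T :=
    AddMonoidHom.mk' (fun x => AddMonoidHom.mk' (fun y i => x.1 i • y) fun _ _ => by
      ext i <;> simp [smul_add]) fun _ _ => by ext y i <;> simp [add_smul]
  refine capable_of_biadditive f fun x hx => ?_
  let e (j : Fin m) : (Fin m → ℤ) × T := (Pi.single j 1, 0)
  have hx₁ : ∀ i, x.1 i = 0 := fun i => by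
    obtain ⟨j, hji⟩ := exists_ne i
    simpa [f, e, hji] using congrFun (congrArg Prod.fst (congrFun (hx (e j)) i)) j
  obtain ⟨i⟩ := (inferInstance : Nonempty (Fin m))
  simpa [f, e, hx₁] using (congrFun (hx (e i)) i).symm

theorem not_capable_int_prod {T : Type} [AddCommGroup T] (hT : AddMonoid.ExponentExists T) :
    ¬ Capable (Multiplicative (ℤ × T)) := by
  obtain ⟨N, hN, hNT⟩ := hT
  intro hc
  have := hc.nsmul_eq_zero_of_forall_nsmul_sub_zsmul_eq_zero (g := (1, 0)) (N := N)
    fun a => ⟨a.1, by ext <;> simp [hNT]⟩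
  simp at this
  omega

section PiZMod

variable {ι : Type} [DecidableEq ι] {n : ι → ℕ}

theorem not_capable_pi_zmod {i₀ : ι} {N : ℕ} (hN : ∀ j ≠ i₀, n j ∣ N) (h : ¬ n i₀ ∣ N) :
    ¬ Capable (Multiplicative ((j : ι) → ZMod (n j))) := by
  intro hc
  have := hc.nsmul_eq_zero_of_forall_nsmul_sub_zsmul_eq_zero (g := Pi.single i₀ 1) (N := N)
    fun a => ⟨(a i₀).cast, ?_⟩
  · exact h (by simpa [ZMod.natCast_eq_zero_iff] using congrFun this i₀)
  · ext j
    obtain rfl | hj := eq_or_ne j i₀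
    · simp [-ZMod.intCast_cast, ZMod.intCast_zmod_cast]
    · simp [hj, nsmul_eq_mul, (ZMod.natCast_eq_zero_iff _ _).2 (hN j hj)]

theorem capable_pi_zmod {i₀ i₁ : ι} (hne : i₀ ≠ i₁) (hdvd : ∀ j, n j ∣ n i₀)
    (heq : n i₁ = n i₀) : Capable (Multiplicative ((j : ι) → ZMod (n j))) := by
  let f : ((j : ι) → ZMod (n j)) →+ ((j : ι) → ZMod (n j)) →+ (j : ι) → ZMod (n j) :=
    AddMonoidHom.mk' (fun x => AddMonoidHom.mk' (fun y j => ZMod.castHom (hdvd j) _ (x i₀) * y j)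
      fun _ _ => by ext j; simp [mul_add])
      fun _ _ => by ext y j; simp [ZMod.cast_add (hdvd _), add_mul]
  refine capable_of_biadditive f fun x hx => ?_
  have hx₀ : x i₀ = 0 := by
    have : CharP (ZMod (n i₁)) (n i₀) := heq ▸ inferInstance
    refine ZMod.castHom_injective (ZMod (n i₁)) ?_
    simpa [f, hne] using congrFun (hx (Pi.single i₁ 1)) i₁
  ext j
  obtain rfl | hj := eq_or_ne j i₀
  · exact hx₀
  · simpa [f, hj, ZMod.cast_one (hdvd _)] using (congrFun (hx (Pi.single i₀ 1)) j).symm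

end PiZMod

theorem dvd_of_le_of_forall_succ_dvd {k : ℕ} {n : Fin k → ℕ}
    (hdvd : ∀ i : Fin k, ∀ h : (i : ℕ) + 1 < k, n ⟨(i : ℕ) + 1, h⟩ ∣ n i) {i j : Fin k}
    (hij : i ≤ j) : n j ∣ n i := by
  obtain ⟨j, hj⟩ := j
  induction j with
  | zero => rw [show i = (⟨0, hj⟩ : Fin k) from Fin.ext (Nat.le_zero.1 hij)]
  | succ j ih =>
    rcases hij.lt_or_eq with h | rfl
    · have hij' : i ≤ ⟨j, by omega⟩ := Fin.le_def.2 (by rw [Fin.lt_def] at h; simp at h ⊢; omega)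
      exact (hdvd ⟨j, by omega⟩ hj).trans (ih (by omega) hij')
    · rfl

theorem capable_pi_zmod_iff {k : ℕ} {n : Fin k → ℕ} (hk : 1 ≤ k) (hn₀ : n ⟨0, hk⟩ ≠ 1)
    (hdvd : ∀ i : Fin k, ∀ h : (i : ℕ) + 1 < k, n ⟨(i : ℕ) + 1, h⟩ ∣ n i) :
    Capable (Multiplicative ((i : Fin k) → ZMod (n i))) ↔ ∃ h : 2 ≤ k, n ⟨0, hk⟩ = n ⟨1, h⟩ := by
  have hle {i j : Fin k} (hij : (i : ℕ) ≤ j) : n j ∣ n i :=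
    dvd_of_le_of_forall_succ_dvd hdvd (Fin.le_def.2 hij)
  constructor
  · intro hc
    by_contra! hne
    by_cases hk₂ : 2 ≤ k
    · refine not_capable_pi_zmod (n := n) (i₀ := (⟨0, hk⟩ : Fin k)) (N := n ⟨1, hk₂⟩)
        (fun j hj => hle (by simp [Fin.ext_iff] at hj ⊢; omega))
        (fun h => hne hk₂ (Nat.dvd_antisymm h (hle (by simp)))) hc
    · exact not_capable_pi_zmod (n := n) (i₀ := (⟨0, hk⟩ : Fin k)) (N := 1)
        (fun j hj => absurd (Fin.ext (by omega)) hj) (fun h => hn₀ (Nat.dvd_one.1 h)) hc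
  · rintro ⟨hk₂, h₀₁⟩
    exact capable_pi_zmod (n := n) (i₀ := (⟨0, hk⟩ : Fin k)) (i₁ := ⟨1, hk₂⟩) (by simp)
      (fun j => hle (by simp)) h₀₁.symm

/-- **Baer's theorem.** A finitely generated abelian group
`ℤ^(m) ⊕ ℤ_{n_1} ⊕ … ⊕ ℤ_{n_k}` (with `m + k ≥ 1`, each `n_i ≥ 2`, and
`n_{i+1} ∣ n_i`) is capable precisely when `m ≥ 2`, or `m = 0`, `k ≥ 2` and
`n_1 = n_2`. -/
theorem baer_capability (G : Type) [Group G] (m k : ℕ) (n : Fin k → ℕ)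
    (hmk : 1 ≤ m + k)
    (hn : ∀ i : Fin k, 2 ≤ n i)
    (hdvd : ∀ i : Fin k, ∀ h : (i : ℕ) + 1 < k, n ⟨(i : ℕ) + 1, h⟩ ∣ n i)
    (hG : Nonempty (G ≃* Multiplicative ((Fin m → ℤ) × ((i : Fin k) → ZMod (n i))))) :
    Capable G ↔ 2 ≤ m ∨ (m = 0 ∧ ∃ h : 2 ≤ k, n ⟨0, by omega⟩ = n ⟨1, by omega⟩) := by
  obtain ⟨e⟩ := hG
  have (i : Fin k) : NeZero (n i) := ⟨by have := hn i; omega⟩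
  rw [e.capable_iff]
  rcases (show m = 0 ∨ m = 1 ∨ 2 ≤ m by omega) with rfl | rfl | hm
  · have hk : 1 ≤ k := by omega
    rw [AddEquiv.uniqueProd.capable_multiplicative_iff,
      capable_pi_zmod_iff hk (by have := hn ⟨0, hk⟩; omega) hdvd]
    simp
  · rw [((AddEquiv.funUnique (Fin 1) ℤ).prodCongr (AddEquiv.refl _)).capable_multiplicative_iff]
    exact iff_of_false (not_capable_int_prod .of_finite) (by omega)
  · exact iff_of_true (capable_pi_int_prod_of_two_le hm) (.inl hm)
end

section
/- Let c ≥ 1 and let G be a finitely generated abelian group. Then G is N_c-capable if and only if G is capable. -/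
/-- A group `G` is `N_c`-capable if it is isomorphic to `E / Z_c(E)` for some group `E`,
where `Z_c(E)` is the `c`-th term of the upper central series of `E`
(the marginal subgroup with respect to the variety of nilpotent groups of class at most `c`). -/
def NcCapable (c : ℕ) (G : Type) [Group G] : Prop :=
  ∃ (E : Type) (_ : Group E), Nonempty (G ≃* E ⧸ Subgroup.upperCentralSeries E c)

open scoped commutatorElement

lemma NcCapable.of_mulEquiv {c : ℕ} {G H : Type} [Group G] [Group H] (e : G ≃* H)
    (h : NcCapable c H) : NcCapable c G :=
  let ⟨E, _, ⟨f⟩⟩ := h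
  ⟨E, _, ⟨e.trans f⟩⟩

lemma ncCapable_one_iff {G : Type} [Group G] : NcCapable 1 G ↔ Capable G :=
  have e (E : Type) [Group E] : E ⧸ Subgroup.upperCentralSeries E 1 ≃* E ⧸ Subgroup.center E :=
    QuotientGroup.quotientMulEquivOfEq (Subgroup.upperCentralSeries_one E)
  ⟨fun ⟨E, _, ⟨f⟩⟩ => ⟨E, _, ⟨f.trans (e E)⟩⟩, fun ⟨E, _, ⟨f⟩⟩ => ⟨E, _, ⟨f.trans (e E).symm⟩⟩⟩

noncomputable def quotientUpperCentralSeriesSuccEquiv (E : Type*) [Group E] (n : ℕ) :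
    E ⧸ Subgroup.upperCentralSeries E (n + 1) ≃*
      (E ⧸ Subgroup.center E) ⧸ Subgroup.upperCentralSeries (E ⧸ Subgroup.center E) n :=
  let π := (QuotientGroup.mk' (Subgroup.upperCentralSeries (E ⧸ Subgroup.center E) n)).comp
    (QuotientGroup.mk' (Subgroup.center E))
  have hπ : π.ker = Subgroup.upperCentralSeries E (n + 1) := by
    rw [← MonoidHom.comap_ker, QuotientGroup.ker_mk',
      Subgroup.comap_upperCentralSeries_quotient_center]
  (QuotientGroup.quotientMulEquivOfEq hπ).symm.trans <|
    QuotientGroup.quotientKerEquivOfSurjective π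
      ((QuotientGroup.mk'_surjective _).comp (QuotientGroup.mk'_surjective _))

lemma NcCapable.of_succ {n : ℕ} {G : Type} [Group G] (h : NcCapable (n + 1) G) :
    NcCapable n G :=
  let ⟨E, _, ⟨f⟩⟩ := h
  ⟨E ⧸ Subgroup.center E, _, ⟨f.trans (quotientUpperCentralSeriesSuccEquiv E n)⟩⟩

lemma NcCapable.capable {c : ℕ} (hc : 1 ≤ c) {G : Type} [Group G] (h : NcCapable c G) :
    Capable G := by
  induction c, hc using Nat.le_induction with
  | base => exact ncCapable_one_iff.mp h
  | succ n _ ih => exact ih h.of_succ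

section UpperActionSeries

variable {N G : Type*} [CommGroup N] [CommGroup G] (φ : G →* MulAut N)

def upperActionSeries : ℕ → Subgroup N
  | 0 => ⊥
  | j + 1 => ⨅ g, (upperActionSeries j).comap ((φ g).toMonoidHom / MonoidHom.id N)

variable {φ}

lemma mem_upperActionSeries_succ {j : ℕ} {n : N} :
    n ∈ upperActionSeries φ (j + 1) ↔ ∀ g, φ g n / n ∈ upperActionSeries φ j := by
  simp [upperActionSeries, Subgroup.mem_iInf]

namespace SemidirectProduct

lemma commutatorElement_mk (n m : N) (h g : G) :
    ⁅(⟨n, h⟩ : N ⋊[φ] G), (⟨m, g⟩ : N ⋊[φ] G)⁆ =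
      inl ((φ h m / m) / (φ g n / n)) := by
  have hconj (a : N) : φ h (φ g ((φ h)⁻¹ a)) = φ g a := by
    rw [← MulAut.mul_apply, ← MulAut.mul_apply, ← map_inv, ← map_mul, ← map_mul,
      mul_inv_cancel_comm]
  ext
  · simp only [commutatorElement_def, mul_left, mul_right, inv_left, inv_right, left_inl, map_mul,
      map_inv, MulAut.mul_apply, hconj, MulAut.apply_inv_self]
    simp only [div_eq_mul_inv, mul_inv_rev, inv_inv, mul_comm, mul_left_comm, mul_assoc]
  · simp only [commutatorElement_def, mul_right, inv_right, right_inl, mul_inv_cancel_comm,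
      mul_inv_cancel]

lemma mem_upperCentralSeries_succ_iff_of_inl {j : ℕ}
    (hj : ∀ w, inl w ∈ Subgroup.upperCentralSeries (N ⋊[φ] G) j ↔
      w ∈ upperActionSeries φ j) (x : N ⋊[φ] G) :
    x ∈ Subgroup.upperCentralSeries (N ⋊[φ] G) (j + 1) ↔
      x.left ∈ upperActionSeries φ (j + 1) ∧ ∀ m, φ x.right m / m ∈ upperActionSeries φ j := by
  obtain ⟨n, h⟩ := x
  have hcomm (m : N) (g : G) :
      ⁅(⟨n, h⟩ : N ⋊[φ] G), (⟨m, g⟩ : N ⋊[φ] G)⁆ ∈ Subgroup.upperCentralSeries _ j ↔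
        (φ h m / m) / (φ g n / n) ∈ upperActionSeries φ j := by
    rw [commutatorElement_mk, hj]
  rw [Subgroup.mem_upperCentralSeries_succ_iff, mem_upperActionSeries_succ]
  refine ⟨fun hx => ⟨fun g => ?_, fun m => ?_⟩,
    fun ⟨hl, hr⟩ y => (hcomm _ _).mpr (div_mem (hr _) (hl _))⟩
  · simpa using inv_mem ((hcomm 1 g).mp (hx _))
  · simpa using (hcomm m 1).mp (hx _)

lemma inl_mem_upperCentralSeries_iff (j : ℕ) (w : N) :
    inl w ∈ Subgroup.upperCentralSeries (N ⋊[φ] G) j ↔ w ∈ upperActionSeries φ j := by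
  induction j generalizing w with
  | zero => simp [upperActionSeries, map_eq_one_iff _ inl_injective]
  | succ j ih => simp [mem_upperCentralSeries_succ_iff_of_inl ih]

lemma mem_upperCentralSeries_succ_iff {j : ℕ} (x : N ⋊[φ] G) :
    x ∈ Subgroup.upperCentralSeries (N ⋊[φ] G) (j + 1) ↔
      x.left ∈ upperActionSeries φ (j + 1) ∧ ∀ m, φ x.right m / m ∈ upperActionSeries φ j :=
  mem_upperCentralSeries_succ_iff_of_inl (inl_mem_upperCentralSeries_iff j) x

end SemidirectProduct

end UpperActionSeries

section PolynomialFunctions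

variable (M : Type*) [CommGroup M]

def mulFwdDiff : Monoid.End (ℤ → M) where
  toFun f x := f (x + 1) / f x
  map_one' := by ext; simp
  map_mul' f g := by ext; simp [mul_div_mul_comm]

variable {M}

lemma mulFwdDiff_apply (f : ℤ → M) (x : ℤ) : mulFwdDiff M f x = f (x + 1) / f x := rfl

lemma mulFwdDiff_pow_succ_apply (j : ℕ) (f : ℤ → M) :
    (mulFwdDiff M ^ (j + 1)) f = mulFwdDiff M ((mulFwdDiff M ^ j) f) := by
  rw [pow_succ']
  rfl

lemma apply_add_eq_mul_zpow_of_mulFwdDiff_eq_const {g : ℤ → M} {b : M}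
    (h : mulFwdDiff M g = fun _ => b) (x k : ℤ) : g (x + k) = g x * b ^ k := by
  have step (y : ℤ) : g (y + 1) = g y * b := div_eq_iff_eq_mul'.mp (congrFun h y)
  induction k using Int.induction_on with
  | zero => simp
  | succ k ih => rw [← add_assoc, step, ih, zpow_add_one, mul_assoc]
  | pred k ih =>
    have hk := step (x + (-k - 1))
    rw [show x + (-k - 1) + 1 = x + -k by ring, ih] at hk
    rw [zpow_sub_one, ← mul_assoc]
    exact eq_mul_inv_of_mul_eq hk.symm

lemma mulFwdDiff_eq_one_iff {g : ℤ → M} :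
    mulFwdDiff M g = 1 ↔ ∀ k : ℤ, (fun x => g (x + k)) = g := by
  refine ⟨fun h k => funext fun x => ?_, fun h => funext fun x => ?_⟩
  · simpa using apply_add_eq_mul_zpow_of_mulFwdDiff_eq_const (b := 1) h x k
  · simp [mulFwdDiff_apply, congrFun (h 1) x]

lemma mulFwdDiff_pow_comp_add (j : ℕ) (f : ℤ → M) (k : ℤ) :
    (mulFwdDiff M ^ j) (fun x => f (x + k)) = fun x => (mulFwdDiff M ^ j) f (x + k) := by
  induction j with
  | zero => rfl
  | succ j ih =>
    ext x
    simp only [pow_succ', Monoid.End.coe_mul, Function.comp_apply, ih, mulFwdDiff_apply,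
      add_right_comm]

lemma mulFwdDiff_pow_zpow_choose (b : M) (i j : ℕ) :
    (mulFwdDiff M ^ i) (fun x => b ^ Ring.choose x (i + j)) = fun x => b ^ Ring.choose x j := by
  induction i with
  | zero => simp
  | succ i ih =>
    have hΔ : mulFwdDiff M (fun x => b ^ Ring.choose x (i + 1 + j)) =
        fun x => b ^ Ring.choose x (i + j) := by
      ext x
      rw [mulFwdDiff_apply, add_right_comm, Ring.choose_succ_succ, zpow_add, mul_div_cancel_right]
    rw [pow_succ, Monoid.End.coe_mul, Function.comp_apply, hΔ, ih]

lemma mulFwdDiff_pow_zpow_choose_self (b : M) (c : ℕ) :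
    (mulFwdDiff M ^ c) (fun x => b ^ Ring.choose x c) = fun _ => b := by
  simpa using mulFwdDiff_pow_zpow_choose b c 0

variable (M) in
/-- The `M`-valued polynomial functions of degree at most `c` on `ℤ`. -/
def polyFun (c : ℕ) : Subgroup (ℤ → M) := MonoidHom.ker (mulFwdDiff M ^ (c + 1))

variable {c : ℕ}

lemma mem_polyFun {f : ℤ → M} : f ∈ polyFun M c ↔ (mulFwdDiff M ^ (c + 1)) f = 1 := Iff.rfl

lemma comp_add_mem_polyFun {f : ℤ → M} (hf : f ∈ polyFun M c) (k : ℤ) :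
    (fun x => f (x + k)) ∈ polyFun M c := by
  rw [mem_polyFun, mulFwdDiff_pow_comp_add, mem_polyFun.mp hf]
  rfl

lemma zpow_choose_mem_polyFun (b : M) : (fun x => b ^ Ring.choose x c) ∈ polyFun M c := by
  rw [mem_polyFun, mulFwdDiff_pow_succ_apply, mulFwdDiff_pow_zpow_choose_self]
  ext x
  simp [mulFwdDiff_apply]

variable (M c) in
def shiftAut : Multiplicative ℤ →* MulAut (polyFun M c) where
  toFun k :=
    { toFun f := ⟨fun x => (f : ℤ → M) (x + k.toAdd), comp_add_mem_polyFun f.2 _⟩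
      invFun f := ⟨fun x => (f : ℤ → M) (x + -k.toAdd), comp_add_mem_polyFun f.2 _⟩
      left_inv f := by ext; simp
      right_inv f := by ext; simp
      map_mul' f g := rfl }
  map_one' := by ext; simp
  map_mul' k l := by ext; simp [add_assoc]

lemma coe_shiftAut (k : Multiplicative ℤ) (f : polyFun M c) :
    (shiftAut M c k f : ℤ → M) = fun x => (f : ℤ → M) (x + k.toAdd) := rfl

lemma mulFwdDiff_pow_shiftAut_div (j : ℕ) (k : Multiplicative ℤ) (f : polyFun M c) :
    (mulFwdDiff M ^ j) (shiftAut M c k f / f : polyFun M c) =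
      (fun x => (mulFwdDiff M ^ j) f (x + k.toAdd)) / (mulFwdDiff M ^ j) f := by
  rw [Subgroup.coe_div, map_div, coe_shiftAut, mulFwdDiff_pow_comp_add]

lemma mem_upperActionSeries_shiftAut {j : ℕ} {f : polyFun M c} :
    f ∈ upperActionSeries (shiftAut M c) j ↔ (mulFwdDiff M ^ j) f = 1 := by
  induction j generalizing f with
  | zero => rw [upperActionSeries, Subgroup.mem_bot, pow_zero, Subtype.ext_iff]; rfl
  | succ j ih =>
    rw [mem_upperActionSeries_succ, Multiplicative.ofAdd.surjective.forall]
    simp only [ih, mulFwdDiff_pow_shiftAut_div, toAdd_ofAdd, div_eq_one]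
    rw [mulFwdDiff_pow_succ_apply, mulFwdDiff_eq_one_iff]

variable (M c) in
def topCoeff : polyFun M c →* M :=
  (Pi.evalMonoidHom (fun _ : ℤ => M) 0).comp ((mulFwdDiff M ^ c).comp (polyFun M c).subtype)

lemma topCoeff_apply (f : polyFun M c) : topCoeff M c f = (mulFwdDiff M ^ c) f 0 := rfl

lemma mulFwdDiff_pow_eq_const (f : polyFun M c) :
    (mulFwdDiff M ^ c) f = fun _ => topCoeff M c f := by
  have hconst : mulFwdDiff M ((mulFwdDiff M ^ c) f) = 1 := by
    rw [← mulFwdDiff_pow_succ_apply]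
    exact f.2
  funext x
  simpa [topCoeff_apply] using congrFun (mulFwdDiff_eq_one_iff.mp hconst x) 0

lemma topCoeff_shiftAut (k : Multiplicative ℤ) (f : polyFun M c) :
    topCoeff M c (shiftAut M c k f) = topCoeff M c f := by
  rw [topCoeff_apply, topCoeff_apply, coe_shiftAut, mulFwdDiff_pow_comp_add,
    mulFwdDiff_pow_eq_const]

lemma topCoeff_surjective : Function.Surjective (topCoeff M c) := by
  intro b
  refine ⟨⟨_, zpow_choose_mem_polyFun b⟩, ?_⟩
  simp [topCoeff_apply, mulFwdDiff_pow_zpow_choose_self]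

lemma shiftAut_div_mem_upperActionSeries_iff (k : Multiplicative ℤ) (f : polyFun M (c + 1)) :
    shiftAut M (c + 1) k f / f ∈ upperActionSeries (shiftAut M (c + 1)) c ↔
      topCoeff M (c + 1) f ^ k.toAdd = 1 := by
  have hΔ : mulFwdDiff M ((mulFwdDiff M ^ c) f) = fun _ => topCoeff M (c + 1) f := by
    rw [← mulFwdDiff_pow_succ_apply, mulFwdDiff_pow_eq_const]
  rw [mem_upperActionSeries_shiftAut, mulFwdDiff_pow_shiftAut_div, div_eq_one, funext_iff]
  simp only [apply_add_eq_mul_zpow_of_mulFwdDiff_eq_const hΔ, mul_eq_left, forall_const]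

variable (M c) in
noncomputable def toProdZMod :
    polyFun M c ⋊[shiftAut M c] Multiplicative ℤ →* M × Multiplicative (ZMod (Monoid.exponent M))
    where
  toFun x := (topCoeff M c x.left, .ofAdd (x.right.toAdd : ZMod (Monoid.exponent M)))
  map_one' := by ext <;> simp
  map_mul' x y := by
    ext
    · simp [topCoeff_shiftAut]
    · simp [ofAdd_add]

lemma toProdZMod_apply (x : polyFun M c ⋊[shiftAut M c] Multiplicative ℤ) :
    toProdZMod M c x = (topCoeff M c x.left, .ofAdd (x.right.toAdd : ZMod (Monoid.exponent M))) :=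
  rfl

lemma toProdZMod_surjective : Function.Surjective (toProdZMod M c) := by
  rintro ⟨b, t⟩
  obtain ⟨f, rfl⟩ := topCoeff_surjective (c := c) b
  obtain ⟨k, hk⟩ := ZMod.intCast_surjective t.toAdd
  exact ⟨⟨f, .ofAdd k⟩, by simp [toProdZMod_apply, hk]⟩

lemma ker_toProdZMod :
    (toProdZMod M (c + 1)).ker = Subgroup.upperCentralSeries _ (c + 1) := by
  ext ⟨f, k⟩
  rw [SemidirectProduct.mem_upperCentralSeries_succ_iff, MonoidHom.mem_ker, toProdZMod_apply,
    Prod.ext_iff, mem_upperActionSeries_shiftAut, mulFwdDiff_pow_eq_const, funext_iff]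
  simp only [shiftAut_div_mem_upperActionSeries_iff]
  refine and_congr (by simp) ?_
  rw [← (topCoeff_surjective (M := M) (c := c + 1)).forall (p := fun b => b ^ k.toAdd = 1),
    ← Group.exponent_dvd_iff_forall_zpow_eq_one,
    ← ZMod.intCast_zmod_eq_zero_iff_dvd]
  exact ofAdd_eq_one

theorem ncCapable_prod_zmod_exponent (M : Type) [CommGroup M] (c : ℕ) :
    NcCapable (c + 1) (M × Multiplicative (ZMod (Monoid.exponent M))) :=
  ⟨_, _, ⟨(QuotientGroup.quotientKerEquivOfSurjective _ toProdZMod_surjective).symm.trans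
    (QuotientGroup.quotientMulEquivOfEq ker_toProdZMod)⟩⟩

end PolynomialFunctions

section CommutatorPow

variable {E : Type*} [Group E] {x y : E}

lemma commutatorElement_pow_right (h : ⁅x, y⁆ ∈ Subgroup.center E) (n : ℕ) :
    ⁅x, y ^ n⁆ = ⁅x, y⁆ ^ n := by
  induction n with
  | zero => simp
  | succ n ih =>
    rw [pow_succ, commutatorElement_mul_right_eq_mul_conj, ih, mul_assoc _ (y ^ n),
      Subgroup.mem_center_iff.mp h (y ^ n), ← mul_assoc, mul_inv_cancel_right, pow_succ]

lemma commutatorElement_pow_left (h : ⁅x, y⁆ ∈ Subgroup.center E) (n : ℕ) :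
    ⁅x ^ n, y⁆ = ⁅x, y⁆ ^ n := by
  have h' : ⁅y, x⁆ ∈ Subgroup.center E := by
    rw [← commutatorElement_inv]
    exact inv_mem h
  rw [← commutatorElement_inv y, commutatorElement_pow_right h', ← inv_pow, commutatorElement_inv]

end CommutatorPow

theorem Capable.pow_eq_one_of_forall_pow_mem_zpowers {G : Type} [CommGroup G] (hG : Capable G)
    {z : G} {n : ℕ} (hz : ∀ g : G, g ^ n ∈ Subgroup.zpowers z) : z ^ n = 1 := by
  obtain ⟨E, _, ⟨φ⟩⟩ := hG
  have hcen (u v : E) : ⁅u, v⁆ ∈ Subgroup.center E := by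
    rw [← QuotientGroup.eq_one_iff, ← QuotientGroup.mk'_apply, map_commutatorElement,
      commutatorElement_eq_one_iff_commute, ← φ.apply_symm_apply (QuotientGroup.mk' _ u),
      ← φ.apply_symm_apply (QuotientGroup.mk' _ v)]
    exact (Commute.all _ _).map φ
  obtain ⟨x, hx⟩ := QuotientGroup.mk_surjective (φ z)
  suffices x ^ n ∈ Subgroup.center E by
    apply φ.injective
    rw [map_pow, ← hx, map_one, ← QuotientGroup.mk_pow, QuotientGroup.eq_one_iff]
    exact this
  refine Subgroup.mem_center_iff.mpr fun y => ?_
  obtain ⟨k, hk : z ^ k = _⟩ := hz (φ.symm y)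
  have hyx : (x ^ k)⁻¹ * y ^ n ∈ Subgroup.center E := by
    rw [← QuotientGroup.eq, QuotientGroup.mk_zpow, QuotientGroup.mk_pow, hx, ← map_zpow, hk,
      map_pow, MulEquiv.apply_symm_apply]
  have hcomm : Commute x (y ^ n) := by
    rw [← mul_inv_cancel_left (x ^ k) (y ^ n)]
    exact (Commute.zpow_right (Commute.refl x) k).mul_right
      (Subgroup.mem_center_iff.mp hyx x)
  have : ⁅x ^ n, y⁆ = 1 := by
    rw [commutatorElement_pow_left (hcen x y), ← commutatorElement_pow_right (hcen x y),
      commutatorElement_eq_one_iff_commute]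
    exact hcomm
  exact (commutatorElement_eq_one_iff_commute.mp this).eq.symm

lemma Capable.dvd_exponent {G A : Type} [CommGroup G] [CommGroup A] {d : ℕ} (hG : Capable G)
    (ψ : G ≃* A × Multiplicative (ZMod d)) : d ∣ Monoid.exponent A := by
  set z := ψ.symm (1, .ofAdd 1)
  have hz (g : G) : g ^ Monoid.exponent A ∈ Subgroup.zpowers z := by
    obtain ⟨k, hk⟩ := ZMod.intCast_surjective (ψ g).2.toAdd
    refine ⟨k * Monoid.exponent A, ψ.injective ?_⟩
    ext
    · simp [z, Monoid.pow_exponent_eq_one]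
    · simp [z, ← hk, ← ofAdd_zsmul, mul_comm]
  have hze : (Multiplicative.ofAdd (1 : ZMod d)) ^ Monoid.exponent A = 1 := by
    simpa [z] using congrArg (fun g => (ψ g).2) (hG.pow_eq_one_of_forall_pow_mem_zpowers hz)
  simpa [orderOf_ofAdd_eq_addOrderOf] using orderOf_dvd_of_pow_eq_one hze

section Splitting

open Function in
lemma exists_finset_pairwise_coprime_forall_dvd_prod {ι : Type*} [Fintype ι] (p e : ι → ℕ)
    (hp : ∀ i, (p i).Prime) :
    ∃ s : Finset ι, (s : Set ι).Pairwise (Nat.Coprime on fun i => p i ^ e i) ∧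
      ∀ i, p i ^ e i ∣ ∏ j ∈ s, p j ^ e j := by
  classical
  have hmax : ∀ r ∈ Finset.univ.image p, ∃ m, p m = r ∧ ∀ j, p j = r → e j ≤ e m := by
    intro r hr
    obtain ⟨i, -, rfl⟩ := Finset.mem_image.mp hr
    obtain ⟨m, hm, hmax⟩ := Finset.exists_max_image (Finset.univ.filter (p · = p i)) e
      ⟨i, by simp⟩
    exact ⟨m, (Finset.mem_filter.mp hm).2, fun j hj => hmax j (by simpa using hj)⟩
  choose sel hsel_p hsel_max using hmax
  let s := (Finset.univ.image p).attach.image fun r => sel r.1 r.2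
  refine ⟨s, fun a ha b hb hab => ?_, fun i => ?_⟩
  · obtain ⟨⟨r, hr⟩, -, rfl⟩ := Finset.mem_image.mp ha
    obtain ⟨⟨t, ht⟩, -, rfl⟩ := Finset.mem_image.mp hb
    have hrt : r ≠ t := by rintro rfl; exact hab rfl
    refine Nat.Coprime.pow _ _ ((Nat.coprime_primes (hp _) (hp _)).mpr ?_)
    rwa [hsel_p, hsel_p]
  · have hi : p i ∈ Finset.univ.image p := Finset.mem_image_of_mem p (Finset.mem_univ i)
    have hdvd : p i ^ e i ∣ p (sel (p i) hi) ^ e (sel (p i) hi) := by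
      rw [hsel_p]
      exact pow_dvd_pow _ (hsel_max _ _ i rfl)
    exact hdvd.trans (Finset.dvd_prod_of_mem _
      (Finset.mem_image.mpr ⟨⟨p i, hi⟩, Finset.mem_attach _ _, rfl⟩))

open Function in
/-- The Chinese remainder theorem applied to the factors indexed by `s`. -/
noncomputable def piZModMulEquivProd {κ : Type*} [Fintype κ] [DecidableEq κ] (n : κ → ℕ)
    (s : Finset κ) (hs : (s : Set κ).Pairwise (Nat.Coprime on n)) :
    (Π k, Multiplicative (ZMod (n k))) ≃*
      (Π k : {k // k ∉ s}, Multiplicative (ZMod (n k))) × Multiplicative (ZMod (∏ k : s, n k)) :=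
  let crt := ZMod.prodEquivPi (fun k : s => n k) fun a b hab =>
    hs a.2 b.2 (Subtype.coe_injective.ne hab)
  let split : (Π k, ZMod (n k)) ≃+ (Π k : {k // k ∉ s}, ZMod (n k)) × ZMod (∏ k : s, n k) :=
    (RingEquiv.piEquivPiSubtypeProd (· ∈ s) _).toAddEquiv.trans
      (AddEquiv.prodComm.trans (AddEquiv.prodCongr (AddEquiv.refl _) crt.symm.toAddEquiv))
  (MulEquiv.piMultiplicative _).symm.trans <| split.toMultiplicative.trans <|
    (MulEquiv.prodMultiplicative _ _).trans
      (MulEquiv.prodCongr (MulEquiv.piMultiplicative _) (MulEquiv.refl _))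

lemma exists_mulEquiv_prod_zmod (G : Type) [CommGroup G] [Group.FG G] :
    ∃ (A : Type) (_ : CommGroup A) (d : ℕ), (∀ a : A, a ^ d = 1) ∧
      Nonempty (G ≃* A × Multiplicative (ZMod d)) := by
  classical
  obtain ⟨ι, j, _, _, p, hp, e, ⟨f⟩⟩ := CommGroup.equiv_free_prod_prod_multiplicative_zmod G
  cases isEmpty_or_nonempty j with
  | inr hj =>
    -- `ZMod 0` is `ℤ`, so a free factor splits off with `d = 0`.
    obtain ⟨j₀⟩ := hj
    let split : (j → Multiplicative ℤ) ≃* Multiplicative ℤ × ({x // x ≠ j₀} → Multiplicative ℤ) :=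
      { Equiv.piSplitAt j₀ _ with map_mul' _ _ := rfl }
    refine ⟨(Π i, Multiplicative (ZMod (p i ^ e i))) × ({x // x ≠ j₀} → Multiplicative ℤ),
      inferInstance, 0, fun a => pow_zero a, ⟨f.trans ?_⟩⟩
    exact (MulEquiv.prodCongr split (MulEquiv.refl _)).trans <| MulEquiv.prodComm.trans <|
      (MulEquiv.prodCongr (MulEquiv.refl _) MulEquiv.prodComm).trans MulEquiv.prodAssoc.symm
  | inl hj =>
    obtain ⟨s, hs, hdvd⟩ := exists_finset_pairwise_coprime_forall_dvd_prod p e hp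
    refine ⟨_, inferInstance, ∏ i : s, p i ^ e i, fun a => funext fun i => ?_,
      ⟨f.trans (MulEquiv.uniqueProd.trans (piZModMulEquivProd _ s hs))⟩⟩
    have hzero : ((∏ i : s, p i ^ e i : ℕ) : ZMod (p i ^ e i)) = 0 := by
      rw [ZMod.natCast_eq_zero_iff, Finset.prod_coe_sort s fun i => p i ^ e i]
      exact hdvd i
    rw [Pi.pow_apply, ← ofAdd_toAdd (a i), ← ofAdd_nsmul, nsmul_eq_mul, hzero, zero_mul]
    rfl

end Splitting

/-- **Burns–Ellis.** A finitely generated abelian group is `N_c`-capable (for `c ≥ 1`)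
if and only if it is capable. -/
theorem ncCapable_iff_capable (c : ℕ) (hc : 1 ≤ c) (G : Type) [CommGroup G]
    (hfg : Group.FG G) :
    NcCapable c G ↔ Capable G := by
  refine ⟨NcCapable.capable hc, fun hG => ?_⟩
  obtain ⟨A, _, d, hA, ⟨ψ⟩⟩ := exists_mulEquiv_prod_zmod G
  obtain rfl : Monoid.exponent A = d :=
    (Monoid.exponent_dvd_of_forall_pow_eq_one hA).antisymm (hG.dvd_exponent ψ)
  obtain ⟨c, rfl⟩ := Nat.exists_eq_add_of_le' hc
  exact (ncCapable_prod_zmod_exponent A c).of_mulEquiv ψ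
end

section
/- For every integer n ≥ 2, the group ℤ_n ⊕ ℤ_n is not S_2-capable. -/
/-- The commutator `[a,b] = a⁻¹ * b⁻¹ * a * b`. -/
def pcomm {E : Type} [Group E] (a b : E) : E := a⁻¹ * b⁻¹ * a * b

/-- The word `w(x,y,z,u) = [[x,y],[z,u]]` defining the variety `S_2` of metabelian groups. -/
def metaW {E : Type} [Group E] (x y z u : E) : E := pcomm (pcomm x y) (pcomm z u)

/-- The marginal set of a group `E` with respect to the variety `S_2` of metabelian
groups: all `a ∈ E` such that replacing any one argument `g` of `w` by `g * a`
leaves the value of `w` unchanged. -/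
def s2MarginalSet (E : Type) [Group E] : Set E :=
  {a : E | ∀ x y z u : E,
    metaW (x * a) y z u = metaW x y z u ∧
    metaW x (y * a) z u = metaW x y z u ∧
    metaW x y (z * a) u = metaW x y z u ∧
    metaW x y z (u * a) = metaW x y z u}

/-- `G` is `S_2`-capable if `G ≅ E / V*(E)` for some group `E`, where `V*(E)` is the
marginal (normal) subgroup of `E` with respect to the variety of metabelian groups,
i.e. the normal subgroup whose underlying set is `s2MarginalSet E`. -/
def IsS2Capable (G : Type) [Group G] : Prop :=
  ∃ (E : Type) (_ : Group E) (H : Subgroup E) (_ : H.Normal),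
    (H : Set E) = s2MarginalSet E ∧ Nonempty (G ≃* E ⧸ H)

/-!
If `E/V*(E)` is abelian then `E' ≤ V*(E)`, and marginality of `a ∈ V*(E)` in the third slot
of `w` gives `[[x,y],[a,u]] = [[x,y],[1,u]] = 1`: the commutators `[a,u]` with `a ∈ V*(E)`
centralize `E'`. If moreover `E/V*(E)` is generated by the images of `e₁, e₂`, the subgroup
`M = ⟨[e₁,e₂], [V*(E),E]⟩` is abelian, and the identities `[xx',b] = [x,b][[x,b],x'][x',b]` and
`[x⁻¹,b] = [x,b]⁻¹[[x,b]⁻¹,x⁻¹]` make `{x | [x,b] ∈ M}` a subgroup containing `V*(E)`; checking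
it on `e₁, e₂` puts every commutator of `E` in `M`. So `E` is metabelian, every element is
marginal, and `E/V*(E)` is trivial.
-/

open Subgroup Set

section Commutator

variable {E : Type} [Group E]

theorem pcomm_eq_one_iff {a b : E} : pcomm a b = 1 ↔ Commute a b := by
  have h : pcomm a b = (b * a)⁻¹ * (a * b) := by simp only [pcomm]; group
  rw [h, inv_mul_eq_one, eq_comm]
  rfl

theorem pcomm_one_left (a : E) : pcomm 1 a = 1 := by
  simp [pcomm]

theorem pcomm_one_right (a : E) : pcomm a 1 = 1 := by
  simp [pcomm]

theorem pcomm_inv (a b : E) : (pcomm a b)⁻¹ = pcomm b a := by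
  simp only [pcomm]; group

theorem pcomm_self (a : E) : pcomm a a = 1 :=
  pcomm_eq_one_iff.2 (Commute.refl a)

theorem pcomm_mul_left (x x' y : E) :
    pcomm (x * x') y = pcomm x y * pcomm (pcomm x y) x' * pcomm x' y := by
  simp only [pcomm]; group

theorem pcomm_inv_left (x y : E) :
    pcomm x⁻¹ y = (pcomm x y)⁻¹ * pcomm (pcomm x y)⁻¹ x⁻¹ := by
  simp only [pcomm]; group

theorem map_pcomm {F : Type} [Group F] (f : E →* F) (a b : E) :
    f (pcomm a b) = pcomm (f a) (f b) := by
  simp only [pcomm, map_mul, map_inv]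

theorem commute_pcomm_of_mem_s2MarginalSet {a : E} (ha : a ∈ s2MarginalSet E) (x y u : E) :
    Commute (pcomm x y) (pcomm a u) := by
  have h := (ha x y 1 u).2.2.1
  rw [one_mul, metaW, metaW, pcomm_one_left, pcomm_one_right] at h
  exact pcomm_eq_one_iff.1 h

theorem commute_of_mem_closure {s : Set E} (hs : ∀ x ∈ s, ∀ y ∈ s, Commute x y) {p q : E}
    (hp : p ∈ closure s) (hq : q ∈ closure s) : Commute p q :=
  Set.centralizer_centralizer_comm_of_comm hs p (closure_le_centralizer_centralizer s hp) q
    (closure_le_centralizer_centralizer s hq)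

end Commutator

section TwoGenerated

variable {E : Type} [Group E] {H : Subgroup E}

theorem pcomm_mem_of_forall_generators (hcomm : ∀ x y : E, pcomm x y ∈ H) {M : Subgroup E}
    (hHM : ∀ a ∈ H, ∀ u, pcomm a u ∈ M) {s : Set E} (hgen : H ⊔ closure s = ⊤) {b : E}
    (hs : ∀ e ∈ s, pcomm e b ∈ M) (x : E) : pcomm x b ∈ M := by
  let S : Subgroup E :=
    { carrier := {x | pcomm x b ∈ M}
      one_mem' := by simp only [Set.mem_ofPred_eq, pcomm_one_left, one_mem]
      mul_mem' := fun {x x'} hx hx' => by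
        rw [Set.mem_ofPred_eq, pcomm_mul_left]
        exact mul_mem (mul_mem hx (hHM _ (hcomm x b) x')) hx'
      inv_mem' := fun {x} hx => by
        rw [Set.mem_ofPred_eq, pcomm_inv_left]
        exact mul_mem (inv_mem hx) (hHM _ (inv_mem (hcomm x b)) x⁻¹) }
  have hS : H ⊔ closure s ≤ S := sup_le (fun a ha => hHM a ha b) ((closure_le S).2 hs)
  exact (hgen ▸ hS) (mem_top x)

theorem metaW_eq_one_of_sup_closure_pair_eq_top (hmarg : (H : Set E) ⊆ s2MarginalSet E)
    (hcomm : ∀ x y : E, pcomm x y ∈ H) {e₁ e₂ : E} (hgen : H ⊔ closure {e₁, e₂} = ⊤)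
    (x y z u : E) : metaW x y z u = 1 := by
  set M := closure (insert (pcomm e₁ e₂) (image2 pcomm H univ))
  have hHM : ∀ a ∈ H, ∀ u, pcomm a u ∈ M := fun a ha u =>
    subset_closure (Or.inr ⟨a, ha, u, trivial, rfl⟩)
  have hc : pcomm e₁ e₂ ∈ M := subset_closure (mem_insert _ _)
  have hM : ∀ p ∈ M, ∀ q ∈ M, Commute p q := by
    refine fun p hp q hq => commute_of_mem_closure ?_ hp hq
    have hcent : ∀ a ∈ H, ∀ x y u : E, Commute (pcomm x y) (pcomm a u) :=
      fun a ha => commute_pcomm_of_mem_s2MarginalSet (hmarg ha)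
    rintro _ (rfl | ⟨a, ha, v, -, rfl⟩) _ (rfl | ⟨a', ha', v', -, rfl⟩)
    · exact Commute.refl _
    · exact hcent a' ha' _ _ _
    · exact (hcent a ha _ _ _).symm
    · exact hcent a' ha' _ _ _
  have hpair : ∀ e ∈ ({e₁, e₂} : Set E), ∀ e' ∈ ({e₁, e₂} : Set E), pcomm e e' ∈ M := by
    have hc' : pcomm e₂ e₁ ∈ M := pcomm_inv e₁ e₂ ▸ inv_mem hc
    simp only [mem_insert_iff, mem_singleton_iff, forall_eq_or_imp, forall_eq, pcomm_self,
      one_mem, hc, hc', and_self]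
  have hright : ∀ e ∈ ({e₁, e₂} : Set E), ∀ x, pcomm e x ∈ M := fun e he x => by
    rw [← pcomm_inv]
    exact inv_mem <|
      pcomm_mem_of_forall_generators hcomm hHM hgen (fun e' he' => hpair e' he' e he) x
  have hall : ∀ x y, pcomm x y ∈ M := fun x y =>
    pcomm_mem_of_forall_generators hcomm hHM hgen (fun e he => hright e he y) x
  exact pcomm_eq_one_iff.2 (hM _ (hall x y) _ (hall z u))

end TwoGenerated

theorem Subgroup.eq_top_of_coe_eq_s2MarginalSet_of_closure_pair_eq_top {E : Type} [Group E]
    {H : Subgroup E} [H.Normal] (hH : (H : Set E) = s2MarginalSet E)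
    (hcomm : ∀ p q : E ⧸ H, Commute p q) {a b : E ⧸ H} (hab : closure {a, b} = ⊤) : H = ⊤ := by
  obtain ⟨e₁, rfl⟩ := QuotientGroup.mk'_surjective H a
  obtain ⟨e₂, rfl⟩ := QuotientGroup.mk'_surjective H b
  have hcommE : ∀ x y : E, pcomm x y ∈ H := fun x y => by
    rw [← QuotientGroup.ker_mk' H, MonoidHom.mem_ker, map_pcomm]
    exact pcomm_eq_one_iff.2 (hcomm _ _)
  have hgen : H ⊔ closure {e₁, e₂} = ⊤ := by
    rw [eq_top_iff, ← comap_top (QuotientGroup.mk' H), ← hab,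
      ← comap_map_eq_self ((QuotientGroup.ker_mk' H).trans_le le_sup_left), ← image_pair,
      ← MonoidHom.map_closure]
    exact comap_mono (map_mono le_sup_right)
  have hw := metaW_eq_one_of_sup_closure_pair_eq_top hH.subset hcommE hgen
  refine eq_top_iff.2 fun g _ => ?_
  rw [← SetLike.mem_coe, hH]
  intro x y z u
  simp only [hw, and_self]

theorem not_isS2Capable_of_closure_pair_eq_top {G : Type} [CommGroup G] [Nontrivial G] {a b : G}
    (hab : closure {a, b} = ⊤) : ¬ IsS2Capable G := by
  rintro ⟨E, _, H, _, hH, ⟨φ⟩⟩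
  have hcomm : ∀ p q : E ⧸ H, Commute p q := by
    intro p q
    rw [← φ.apply_symm_apply p, ← φ.apply_symm_apply q]
    exact (Commute.all _ _).map φ
  have hab' : closure {φ a, φ b} = ⊤ := by
    rw [← image_pair, ← MonoidHom.coe_coe φ, ← MonoidHom.map_closure, hab,
      map_top_of_surjective _ φ.surjective]
  obtain rfl := H.eq_top_of_coe_eq_s2MarginalSet_of_closure_pair_eq_top hH hcomm hab'
  have := QuotientGroup.subsingleton_quotient_top (G := E)
  exact not_subsingleton G φ.injective.subsingleton

theorem closure_ofAdd_pair_eq_top (n : ℕ) :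
    Subgroup.closure {Multiplicative.ofAdd ((1 : ZMod n), (0 : ZMod n)), .ofAdd (0, 1)} = ⊤ := by
  refine eq_top_iff.2 fun x _ => ?_
  have hx : x = Multiplicative.ofAdd ((1 : ZMod n), (0 : ZMod n)) ^ (x.toAdd.1.cast : ℤ)
      * .ofAdd (0, 1) ^ (x.toAdd.2.cast : ℤ) := by
    apply Multiplicative.toAdd.injective
    simp only [toAdd_mul, toAdd_zpow, toAdd_ofAdd, Prod.smul_mk, zsmul_eq_mul, mul_one, mul_zero,
      Prod.mk_add_mk, add_zero, zero_add, ZMod.intCast_zmod_cast]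
  rw [hx]
  exact mul_mem (zpow_mem (subset_closure (mem_insert _ _)) _)
    (zpow_mem (subset_closure (mem_insert_of_mem _ (mem_singleton _))) _)

/-- For every `n ≥ 2`, the group `ℤ_n ⊕ ℤ_n` is not `S_2`-capable. -/
theorem zmod_sq_not_s2Capable (n : ℕ) (hn : 2 ≤ n) :
    ¬ IsS2Capable (Multiplicative (ZMod n × ZMod n)) :=
  have : Fact (1 < n) := ⟨hn⟩
  not_isS2Capable_of_closure_pair_eq_top (closure_ofAdd_pair_eq_top n)
end

section
/- A group G is capable if and only if for every non-identity element g of G there exist a group E and a surjective group homomorphism ψ : E → G such that the kernel of ψ is contained in the center Z(E) of E and g does not belong to the image ψ(Z(E)) of the center of E under ψ. -/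
open Subgroup

theorem capable_iff_exists_surjective_ker_eq_center (G : Type) [Group G] :
    Capable G ↔ ∃ (E : Type) (_ : Group E) (ψ : E →* G),
      Function.Surjective ψ ∧ ψ.ker = center E := by
  constructor
  · rintro ⟨E, _, ⟨e⟩⟩
    refine ⟨E, inferInstance,
      (e.symm : E ⧸ center E →* G).comp (QuotientGroup.mk' (center E)),
      e.symm.surjective.comp (QuotientGroup.mk'_surjective _), ?_⟩
    rw [MonoidHom.ker_mulEquiv_comp, QuotientGroup.ker_mk']
  · rintro ⟨E, _, ψ, hsurj, hker⟩
    exact ⟨E, inferInstance,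
      ⟨((QuotientGroup.quotientKerEquivOfSurjective ψ hsurj).symm.trans
        (QuotientGroup.quotientMulEquivOfEq hker))⟩⟩

section FiberProduct

variable {G ι : Type*} [Group G] {E : ι → Type*} [∀ i, Group (E i)] (ψ : ∀ i, E i →* G)

/-- Carrying the common image in `G` as a coordinate makes this the fiber product also when
`ι` is empty. -/
def fiberProduct : Subgroup (G × ∀ i, E i) where
  carrier := {p | ∀ i, ψ i (p.2 i) = p.1}
  one_mem' i := map_one (ψ i)
  mul_mem' ha hb i := by
    simp only [Prod.snd_mul, Pi.mul_apply, map_mul, ha i, hb i, Prod.fst_mul]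
  inv_mem' ha i := by simp only [Prod.snd_inv, Pi.inv_apply, map_inv, ha i, Prod.fst_inv]

def fiberProduct.proj : fiberProduct ψ →* G :=
  (MonoidHom.fst G (∀ i, E i)).comp (fiberProduct ψ).subtype

variable {ψ}

theorem fiberProduct.proj_surjective (hψ : ∀ i, Function.Surjective (ψ i)) :
    Function.Surjective (fiberProduct.proj ψ) := by
  intro g
  choose x hx using fun i => hψ i g
  exact ⟨⟨(g, x), hx⟩, rfl⟩

theorem fiberProduct.exists_snd_eq (hψ : ∀ i, Function.Surjective (ψ i)) (i : ι) (x : E i) :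
    ∃ p ∈ fiberProduct ψ, p.2 i = x := by
  classical
  choose y hy using fun j => hψ j (ψ i x)
  refine ⟨(ψ i x, Function.update y i x), fun j => ?_, Function.update_self i x y⟩
  rcases eq_or_ne j i with rfl | hji
  · simp only [Function.update_self]
  · simp only [Function.update_of_ne hji, hy j]

theorem fiberProduct.ker_proj_le_center (hker : ∀ i, (ψ i).ker ≤ center (E i)) :
    (fiberProduct.proj ψ).ker ≤ center (fiberProduct ψ) := by
  intro p hp
  have hcoord : ∀ i, p.1.2 i ∈ center (E i) := fun i =>
    hker i (by rw [MonoidHom.mem_ker, p.2 i]; exact hp)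
  rw [mem_center_iff]
  intro q
  ext
  · simp only [coe_mul, Prod.fst_mul, show p.1.1 = 1 from hp, mul_one, one_mul]
  · exact mem_center_iff.mp (hcoord _) _

theorem fiberProduct.snd_mem_center (hψ : ∀ i, Function.Surjective (ψ i))
    {p : fiberProduct ψ} (hp : p ∈ center (fiberProduct ψ)) (i : ι) :
    p.1.2 i ∈ center (E i) := by
  rw [mem_center_iff]
  intro x
  obtain ⟨q, hq, rfl⟩ := fiberProduct.exists_snd_eq hψ i x
  have hcomm := mem_center_iff.mp hp ⟨q, hq⟩
  exact congrFun (congrArg (fun r : fiberProduct ψ => r.1.2) hcomm) i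

theorem fiberProduct.map_center_proj_le (hψ : ∀ i, Function.Surjective (ψ i)) (i : ι) :
    (center (fiberProduct ψ)).map (fiberProduct.proj ψ) ≤ (center (E i)).map (ψ i) := by
  rintro _ ⟨p, hp, rfl⟩
  exact ⟨p.1.2 i, fiberProduct.snd_mem_center hψ hp i, p.2 i⟩

end FiberProduct

/-- A group `G` is capable if and only if for every non-identity `g ∈ G` there are a
group `E` and a surjection `ψ : E → G` with `ker ψ ≤ Z(E)` and `g ∉ ψ(Z(E))`. -/
theorem capable_iff_forall_surjection (G : Type) [Group G] :
    Capable G ↔ ∀ g : G, g ≠ 1 →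
      ∃ (E : Type) (_ : Group E) (ψ : E →* G),
        Function.Surjective ψ ∧ ψ.ker ≤ Subgroup.center E ∧
        g ∉ (Subgroup.center E).map ψ := by
  rw [capable_iff_exists_surjective_ker_eq_center]
  constructor
  · rintro ⟨E, _, ψ, hsurj, hker⟩ g hg
    have hbot : (center E).map ψ = ⊥ := (Subgroup.map_eq_bot_iff _).mpr hker.ge
    exact ⟨E, inferInstance, ψ, hsurj, hker.le, by rwa [hbot, mem_bot]⟩
  · intro h
    choose E _ ψ hsurj hker hnot using fun g : {g : G // g ≠ 1} => h g g.2
    have hcenter : center (fiberProduct ψ) ≤ (fiberProduct.proj ψ).ker := by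
      intro p hp
      by_contra hne
      exact hnot ⟨_, hne⟩ (fiberProduct.map_center_proj_le hsurj _ ⟨p, hp, rfl⟩)
    exact ⟨fiberProduct ψ, inferInstance, fiberProduct.proj ψ,
      fiberProduct.proj_surjective hsurj,
      (fiberProduct.ker_proj_le_center hker).antisymm hcenter⟩
end

section
/- Let G be an abelian group. Then G is capable if and only if for every non-identity element x of G, the homomorphism H_2(G; ℤ) → H_2(G/⟨x⟩; ℤ) on second group homology with trivial ℤ coefficients induced by the quotient map G → G/⟨x⟩ has non-trivial kernel, where ⟨x⟩ denotes the cyclic subgroup generated by x. -/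
/-!  The Schur multiplier `H₂(G; ℤ)` of a group `G` (second integral group homology
with trivial coefficients), realized via Hopf's formula
`H₂(G; ℤ) ≅ (R ∩ [F, F]) / [F, R]` for the canonical free presentation
`1 → R → F → G → 1` with `F` the free group on the underlying set of `G`. -/

/-- The canonical presentation surjection `F = FreeGroup G →* G`. -/
def presHom (G : Type) [Group G] : FreeGroup G →* G := FreeGroup.lift id

/-- The relation subgroup `R` of the canonical free presentation of `G`. -/
def presRel (G : Type) [Group G] : Subgroup (FreeGroup G) := (presHom G).ker

instance presRel_normal (G : Type) [Group G] : (presRel G).Normal :=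
  MonoidHom.normal_ker _

/-- The subgroup `R ∩ [F, F]` of `F = FreeGroup G`. -/
def hopfTop (G : Type) [Group G] : Subgroup (FreeGroup G) :=
  presRel G ⊓ commutator (FreeGroup G)

/-- The subgroup `[F, R]`, viewed as a subgroup of `R ∩ [F, F]`. -/
def hopfBot (G : Type) [Group G] : Subgroup ↥(hopfTop G) :=
  (⁅(⊤ : Subgroup (FreeGroup G)), presRel G⁆).subgroupOf (hopfTop G)

instance hopfBot_normal (G : Type) [Group G] : (hopfBot G).Normal :=
  Subgroup.normal_subgroupOf

/-- **Hopf's formula**: the Schur multiplier `H₂(G; ℤ)` of `G`, i.e. the second group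
homology of `G` with trivial `ℤ` coefficients, given as `(R ∩ [F, F]) / [F, R]`. -/
def schurMultiplier (G : Type) [Group G] : Type :=
  ↥(hopfTop G) ⧸ hopfBot G

noncomputable instance (G : Type) [Group G] : Group (schurMultiplier G) :=
  inferInstanceAs (Group (↥(hopfTop G) ⧸ hopfBot G))

lemma presHom_comp {G Q : Type} [Group G] [Group Q] (f : G →* Q) :
    (presHom Q).comp (FreeGroup.map f) = f.comp (presHom G) := by
  apply FreeGroup.ext_hom
  intro a
  simp [presHom]

lemma freeGroup_map_mem_hopfTop {G Q : Type} [Group G] [Group Q] (f : G →* Q)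
    (x : ↥(hopfTop G)) : FreeGroup.map f (x : FreeGroup G) ∈ hopfTop Q := by
  obtain ⟨hker, hcomm⟩ := x.2
  constructor
  · show FreeGroup.map f (x : FreeGroup G) ∈ (presHom Q).ker
    have h1 : presHom Q (FreeGroup.map f (x : FreeGroup G)) =
        f (presHom G (x : FreeGroup G)) := by
      have := congrArg (fun φ => φ (x : FreeGroup G)) (presHom_comp f)
      simpa using this
    have h2 : presHom G (x : FreeGroup G) = 1 := hker
    simp [MonoidHom.mem_ker, h1, h2]
  · have : Subgroup.map (FreeGroup.map f) (commutator (FreeGroup G)) ≤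
        commutator (FreeGroup Q) := by
      rw [commutator_def, Subgroup.map_commutator]
      exact Subgroup.commutator_mono le_top le_top
    exact this ⟨_, hcomm, rfl⟩

/-- The restriction of `FreeGroup.map f` to a homomorphism `R ∩ [F,F] → R' ∩ [F',F']`. -/
def hopfTopMap {G Q : Type} [Group G] [Group Q] (f : G →* Q) :
    ↥(hopfTop G) →* ↥(hopfTop Q) :=
  ((FreeGroup.map f).domRestrict (hopfTop G)).codRestrict (hopfTop Q)
    (fun x => freeGroup_map_mem_hopfTop f x)

lemma hopfBot_le_comap {G Q : Type} [Group G] [Group Q] (f : G →* Q) :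
    hopfBot G ≤ (hopfBot Q).comap (hopfTopMap f) := by
  intro x hx
  have hmap : Subgroup.map (FreeGroup.map f) ⁅(⊤ : Subgroup (FreeGroup G)), presRel G⁆ ≤
      ⁅(⊤ : Subgroup (FreeGroup Q)), presRel Q⁆ := by
    rw [Subgroup.map_commutator]
    refine Subgroup.commutator_mono le_top ?_
    rintro y ⟨z, hz, rfl⟩
    show presHom Q (FreeGroup.map f z) = 1
    have := congrArg (fun φ => φ z) (presHom_comp f)
    simp only [MonoidHom.comp_apply] at this
    rw [this]
    have hz1 : presHom G z = 1 := hz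
    simp [hz1]
  exact hmap ⟨_, hx, rfl⟩

/-- The homomorphism `H₂(G; ℤ) →* H₂(Q; ℤ)` induced by `f : G →* Q`
(functoriality of the Schur multiplier). -/
noncomputable def schurMultiplierMap {G Q : Type} [Group G] [Group Q] (f : G →* Q) :
    schurMultiplier G →* schurMultiplier Q :=
  QuotientGroup.map (hopfBot G) (hopfBot Q) (hopfTopMap f) (hopfBot_le_comap f)

/-! Let `E = F/[F,R]` be the free central extension of `G` and `Z*(G)` (the epicenter) the image
of `Z(E)` in `G`. Every central extension of `G` receives a map from `E`, which carries `Z(E)` into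
the center, so `G` is capable iff `Z*(G) = 1`. For a central subgroup `N` with preimage `S` in
`F`, Hopf's formula identifies the kernel of `H₂(G) → H₂(G/N)` with `[F,S]/[F,R]`: the map
`F → F(G/N)` splits, so its kernel meets `[F,F]` only inside `[F,S]`. Hence the map is injective
iff `S/[F,R]` is central in `E`, i.e. iff `N ≤ Z*(G)`; for abelian `G` take `N = ⟨x⟩`. -/

open Subgroup
open scoped commutatorElement

section CentralExtensions

variable {A B : Type*} [Group A] [Group B]

lemma commutatorElement_eq_of_mul_inv_mem_center {a a' b b' : A}
    (ha : a * a'⁻¹ ∈ center A) (hb : b * b'⁻¹ ∈ center A) : ⁅a, b⁆ = ⁅a', b'⁆ := by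
  obtain ⟨c, hc, rfl⟩ : ∃ c ∈ center A, a = c * a' := ⟨_, ha, by group⟩
  obtain ⟨d, hd, rfl⟩ : ∃ d ∈ center A, b = d * b' := ⟨_, hb, by group⟩
  rw [mem_center_iff] at hc hd
  have hconj : ∀ z : A, (∀ g, g * z = z * g) → ∀ x, z * x * z⁻¹ = x := fun z hz x => by
    rw [← hz, mul_inv_cancel_right]
  simp only [commutatorElement_def]
  calc c * a' * (d * b') * (c * a')⁻¹ * (d * b')⁻¹
      = c * (a' * (d * b') * a'⁻¹) * c⁻¹ * (b'⁻¹ * d⁻¹) := by group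
    _ = a' * d * b' * a'⁻¹ * b'⁻¹ * d⁻¹ := by rw [hconj c hc]; group
    _ = d * (a' * b' * a'⁻¹ * b'⁻¹) * d⁻¹ := by rw [hd a']; group
    _ = a' * b' * a'⁻¹ * b'⁻¹ := hconj d hd _

lemma MonoidHom.ker_inf_commutator_eq_bot_of_le_center (ψ : A →* B) (σ : B →* A)
    (hσ : Function.RightInverse σ ψ) (hc : ψ.ker ≤ center A) :
    ψ.ker ⊓ commutator A = ⊥ := by
  have hcomm : commutator A ≤ (commutator B).map σ := by
    rw [_root_.commutator_def, commutator_le]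
    intro a _ b _
    have hcen : ∀ a, a * (σ (ψ a))⁻¹ ∈ center A := fun a => hc (by simp [hσ (ψ a)])
    rw [commutatorElement_eq_of_mul_inv_mem_center (hcen a) (hcen b), ← map_commutatorElement]
    exact mem_map_of_mem σ (commutator_mem_commutator (mem_top _) (mem_top _))
  rw [eq_bot_iff]
  rintro w ⟨hw, hwc⟩
  obtain ⟨b, -, rfl⟩ := hcomm hwc
  have hb : b = 1 := (hσ b).symm.trans hw
  rw [hb, map_one]
  exact one_mem _

lemma map_commutator_le (f : A →* B) : (commutator A).map f ≤ commutator B :=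
  (map_commutator_eq (G := A) f).trans_le (commutator_mono le_top le_top)

lemma commutator_top_le_iff_map_le_center (D : Subgroup A) [D.Normal] (S : Subgroup A) :
    ⁅(⊤ : Subgroup A), S⁆ ≤ D ↔ S.map (QuotientGroup.mk' D) ≤ center (A ⧸ D) := by
  rw [map_le_iff_le_comap, ← Subgroup.upperCentralSeriesStep_eq_comap_center, commutator_comm,
    commutator_le]
  simp only [mem_top, forall_const]
  rfl

lemma MonoidHom.ker_inf_commutator_le_of_rightInverse (φ : A →* B) (σ : B →* A)
    (hσ : Function.RightInverse σ φ) : φ.ker ⊓ commutator A ≤ ⁅(⊤ : Subgroup A), φ.ker⁆ := by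
  set D : Subgroup A := ⁅(⊤ : Subgroup A), φ.ker⁆
  have hD : D ≤ φ.ker := commutator_le_right _ _
  let ψ : A ⧸ D →* B := QuotientGroup.lift D φ hD
  have hψ : ψ.ker ≤ center (A ⧸ D) := by
    rw [QuotientGroup.ker_lift, ← commutator_top_le_iff_map_le_center]
  have hbot := ψ.ker_inf_commutator_eq_bot_of_le_center ((QuotientGroup.mk' D).comp σ)
    (fun b => hσ b) hψ
  rintro w ⟨hw, hwc⟩
  rw [← QuotientGroup.eq_one_iff (N := D)]
  refine (eq_bot_iff_forall _).mp hbot _ ⟨hw, ?_⟩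
  exact map_commutator_le (QuotientGroup.mk' D) ⟨w, hwc, rfl⟩

lemma mem_commutator_comap_of_map_mem {φ : A →* B} (σ : B →* A)
    (hσ : Function.RightInverse σ φ) (K : Subgroup B) {w : A} (hw : w ∈ commutator A)
    (hφw : φ w ∈ ⁅(⊤ : Subgroup B), K⁆) : w ∈ ⁅(⊤ : Subgroup A), K.comap φ⁆ := by
  have hφ : Function.Surjective φ := hσ.surjective
  rw [← map_comap_eq_self_of_surjective hφ K, ← map_top_of_surjective φ hφ,
    ← map_commutator] at hφw
  obtain ⟨v, hv, hvw⟩ := hφw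
  have hker : v⁻¹ * w ∈ φ.ker ⊓ commutator A := by
    refine mem_inf.mpr ⟨by simp [hvw], mul_mem (inv_mem ?_) hw⟩
    exact commutator_mono le_top le_top hv
  have hrest := commutator_mono le_rfl (φ.ker_le_comap K)
    (φ.ker_inf_commutator_le_of_rightInverse σ hσ hker)
  simpa using mul_mem hv hrest

lemma commutator_top_comap_le_ker {φ : A →* B} {N : Subgroup B} (hN : N ≤ center B) :
    ⁅(⊤ : Subgroup A), N.comap φ⁆ ≤ φ.ker := by
  rw [← Subgroup.map_eq_bot_iff, eq_bot_iff, map_commutator]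
  exact (commutator_mono le_top ((map_comap_le _ _).trans hN)).trans
    (commutator_center_right _).le

end CentralExtensions

lemma comap_le_center_iff_le_map_center {E G : Type*} [Group E] [Group G] {ψ : E →* G}
    (hψ : Function.Surjective ψ) (hker : ψ.ker ≤ center E) (N : Subgroup G) :
    N.comap ψ ≤ center E ↔ N ≤ (center E).map ψ := by
  refine ⟨fun h => ?_, fun h => ?_⟩
  · rw [← map_comap_eq_self_of_surjective hψ N]
    exact map_mono h
  · rw [← sup_eq_left.mpr hker, ← comap_map_eq]
    exact comap_mono h

lemma map_center_le_center_of_surjective_comp {H E G : Type*} [Group H] [Group E] [Group G]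
    (f : H →* E) {ψ : E →* G} (hψf : Function.Surjective (ψ.comp f))
    (hker : ψ.ker ≤ center E) : (center H).map f ≤ center E := by
  rintro _ ⟨z, hz, rfl⟩
  replace hz := mem_center_iff.mp hz
  rw [mem_center_iff]
  intro y
  obtain ⟨x, hx⟩ := hψf (ψ y)
  have hc : y * (f x)⁻¹ ∈ center E := hker (by simp [← hx])
  calc y * f z = y * (f x)⁻¹ * f (x * z) := by rw [map_mul]; group
    _ = y * (f x)⁻¹ * f (z * x) := by rw [hz x]
    _ = f z * (y * (f x)⁻¹) * f x := by rw [map_mul, mem_center_iff.mp hc]; group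
    _ = f z * y := by group

abbrev FreeCentralExtension (G : Type) [Group G] : Type :=
  FreeGroup G ⧸ ⁅(⊤ : Subgroup (FreeGroup G)), presRel G⁆

namespace FreeCentralExtension

variable (G : Type) [Group G]

def proj : FreeCentralExtension G →* G :=
  QuotientGroup.lift _ (presHom G) (commutator_le_right ⊤ (presHom G).ker)

lemma proj_comp_mk : (proj G).comp (QuotientGroup.mk' _) = presHom G := rfl

lemma proj_surjective : Function.Surjective (proj G) :=
  fun g => ⟨QuotientGroup.mk (FreeGroup.of g), by simp [proj, presHom]⟩

lemma ker_proj : (proj G).ker = (presRel G).map (QuotientGroup.mk' _) :=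
  QuotientGroup.ker_lift _ _ _

lemma ker_proj_le_center : (proj G).ker ≤ center (FreeCentralExtension G) := by
  rw [ker_proj, ← commutator_top_le_iff_map_le_center]

end FreeCentralExtension

open FreeCentralExtension

def epicenter (G : Type) [Group G] : Subgroup G :=
  (center (FreeCentralExtension G)).map (proj G)

lemma epicenter_le_map_center {G E : Type} [Group G] [Group E] {ψ : E →* G}
    (hψ : Function.Surjective ψ) (hker : ψ.ker ≤ center E) :
    epicenter G ≤ (center E).map ψ := by
  let φ : FreeGroup G →* E := FreeGroup.lift (Function.surjInv hψ)
  have hψφ : ψ.comp φ = presHom G :=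
    FreeGroup.ext_hom _ _ fun g => by simp [φ, presHom, Function.surjInv_eq hψ]
  have hφR : (presRel G).map φ ≤ center E := by
    rintro _ ⟨r, hr, rfl⟩
    exact hker (by rw [MonoidHom.mem_ker, ← MonoidHom.comp_apply, hψφ]; exact hr)
  have hφ : ⁅(⊤ : Subgroup (FreeGroup G)), presRel G⁆ ≤ φ.ker := by
    rw [← Subgroup.map_eq_bot_iff, eq_bot_iff, map_commutator]
    exact (commutator_mono le_top hφR).trans (commutator_center_right _).le
  let φ' : FreeCentralExtension G →* E := QuotientGroup.lift _ φ hφ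
  have hψφ' : ψ.comp φ' = proj G := QuotientGroup.monoidHom_ext _ hψφ
  have hcenter : (center _).map φ' ≤ center E :=
    map_center_le_center_of_surjective_comp φ' (hψφ' ▸ proj_surjective G) hker
  rintro _ ⟨z, hz, rfl⟩
  exact ⟨φ' z, hcenter ⟨z, hz, rfl⟩, by rw [← MonoidHom.comp_apply, hψφ']⟩

lemma capable_iff_epicenter_eq_bot (G : Type) [Group G] : Capable G ↔ epicenter G = ⊥ := by
  constructor
  · rintro ⟨E, _, ⟨e⟩⟩
    let ψ : E →* G := (e.symm : E ⧸ center E →* G).comp (QuotientGroup.mk' (center E))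
    have hψ : ψ.ker = center E := by
      rw [MonoidHom.ker_mulEquiv_comp, QuotientGroup.ker_mk']
    have hle := epicenter_le_map_center (ψ := ψ)
      (e.symm.surjective.comp (QuotientGroup.mk'_surjective _)) hψ.le
    rwa [← hψ, (Subgroup.map_eq_bot_iff _).mpr le_rfl, le_bot_iff] at hle
  · intro h
    have hker : (proj G).ker = center _ :=
      le_antisymm (ker_proj_le_center G) ((Subgroup.map_eq_bot_iff _).mp h)
    exact ⟨FreeCentralExtension G, inferInstance,
      ⟨(QuotientGroup.quotientKerEquivOfSurjective _ (proj_surjective G)).symm.trans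
        (QuotientGroup.quotientMulEquivOfEq hker)⟩⟩

section SchurMultiplier

variable {G Q : Type} [Group G] [Group Q]

lemma comap_freeGroupMap_presRel (f : G →* Q) :
    (presRel Q).comap (FreeGroup.map f) = f.ker.comap (presHom G) := by
  ext w
  simp only [mem_comap, presRel, MonoidHom.mem_ker]
  rw [← MonoidHom.comp_apply, presHom_comp, MonoidHom.comp_apply]

lemma schurMultiplier_mk_eq_one_iff (w : hopfTop G) :
    (QuotientGroup.mk' (hopfBot G) w : schurMultiplier G) = 1 ↔
      (w : FreeGroup G) ∈ ⁅(⊤ : Subgroup (FreeGroup G)), presRel G⁆ :=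
  (QuotientGroup.eq_one_iff w).trans mem_subgroupOf

lemma schurMultiplierMap_mk_eq_one_iff (f : G →* Q) (w : hopfTop G) :
    schurMultiplierMap f (QuotientGroup.mk' (hopfBot G) w) = 1 ↔
      FreeGroup.map f w ∈ ⁅(⊤ : Subgroup (FreeGroup Q)), presRel Q⁆ :=
  (QuotientGroup.eq_one_iff _).trans mem_subgroupOf

lemma schurMultiplierMap_ker_eq_bot_iff (f : G →* Q) :
    (schurMultiplierMap f).ker = ⊥ ↔ ∀ w ∈ hopfTop G,
      FreeGroup.map f w ∈ ⁅(⊤ : Subgroup (FreeGroup Q)), presRel Q⁆ →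
        w ∈ ⁅(⊤ : Subgroup (FreeGroup G)), presRel G⁆ := by
  rw [eq_bot_iff_forall]
  constructor
  · intro h w hw hfw
    exact (schurMultiplier_mk_eq_one_iff ⟨w, hw⟩).mp
      (h _ ((schurMultiplierMap_mk_eq_one_iff f ⟨w, hw⟩).mpr hfw))
  · intro h c hc
    obtain ⟨⟨w, hw⟩, rfl⟩ := QuotientGroup.mk'_surjective (hopfBot G) c
    exact (schurMultiplier_mk_eq_one_iff _).mpr
      (h w hw ((schurMultiplierMap_mk_eq_one_iff f _).mp hc))

lemma schurMultiplierMap_ker_eq_bot_iff_of_surjective {f : G →* Q}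
    (hf : Function.Surjective f) :
    (schurMultiplierMap f).ker = ⊥ ↔ ∀ w ∈ hopfTop G,
      w ∈ ⁅(⊤ : Subgroup (FreeGroup G)), f.ker.comap (presHom G)⁆ →
        w ∈ ⁅(⊤ : Subgroup (FreeGroup G)), presRel G⁆ := by
  have hσ : Function.RightInverse (FreeGroup.map (Function.surjInv hf)) (FreeGroup.map f) :=
    fun w => by
      rw [FreeGroup.map.comp, (Function.rightInverse_surjInv hf).comp_eq_id, FreeGroup.map.id]
  rw [schurMultiplierMap_ker_eq_bot_iff, ← comap_freeGroupMap_presRel]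
  refine forall₂_congr fun w hw => imp_congr_left ⟨fun h => ?_, fun h => ?_⟩
  · exact mem_commutator_comap_of_map_mem _ hσ _ hw.2 h
  · have hmap := mem_map_of_mem (FreeGroup.map f) h
    rw [map_commutator] at hmap
    exact commutator_mono le_top (map_comap_le _ _) hmap

lemma schurMultiplierMap_ker_eq_bot_iff_le_epicenter {f : G →* Q}
    (hf : Function.Surjective f) (hcen : f.ker ≤ center G) :
    (schurMultiplierMap f).ker = ⊥ ↔ f.ker ≤ epicenter G := by
  set S := f.ker.comap (presHom G) with hS_def
  have hS : ⁅⊤, S⁆ ≤ hopfTop G :=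
    le_inf (commutator_top_comap_le_ker hcen) (commutator_mono le_top le_top)
  calc (schurMultiplierMap f).ker = ⊥
      ↔ ⁅⊤, S⁆ ≤ ⁅(⊤ : Subgroup (FreeGroup G)), presRel G⁆ := by
        rw [schurMultiplierMap_ker_eq_bot_iff_of_surjective hf]
        exact ⟨fun h w hw => h w (hS hw) hw, fun h w _ hw => h hw⟩
    _ ↔ S.map (QuotientGroup.mk' _) ≤ center _ := commutator_top_le_iff_map_le_center _ _
    _ ↔ f.ker.comap (proj G) ≤ center _ := by
        rw [hS_def, ← proj_comp_mk, ← comap_comap,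
          map_comap_eq_self_of_surjective (QuotientGroup.mk'_surjective _)]
    _ ↔ f.ker ≤ epicenter G :=
        comap_le_center_iff_le_map_center (proj_surjective G) (ker_proj_le_center G) _

end SchurMultiplier

/-- An abelian group `G` is capable if and only if for every non-identity `x ∈ G` the
induced homomorphism `H₂(G; ℤ) → H₂(G/⟨x⟩; ℤ)` on second integral group homology
(Schur multipliers) has non-trivial kernel, where `⟨x⟩` is the cyclic subgroup
generated by `x`. -/
theorem abelian_capable_iff_schurMultiplier_kernels (G : Type) [CommGroup G] :
    Capable G ↔ ∀ x : G, x ≠ 1 →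
      (schurMultiplierMap (QuotientGroup.mk' (Subgroup.zpowers x))).ker ≠ ⊥ := by
  rw [capable_iff_epicenter_eq_bot, eq_bot_iff_forall]
  refine forall_congr' fun x => ?_
  have hcen : (QuotientGroup.mk' (zpowers x)).ker ≤ center G := by
    simp [CommGroup.center_eq_top]
  simp only [ne_eq]
  rw [schurMultiplierMap_ker_eq_bot_iff_le_epicenter (QuotientGroup.mk'_surjective _) hcen,
    QuotientGroup.ker_mk', zpowers_le]
  tauto
end
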